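/- arXiv:1005.0882 — 2 statements merged into one kernel-verified Lean document; each statement's English description precedes it below -/
import Mathlib

section
/- Let X₁, X₂ ∈ A⁺. Then either (a) ρ(X₁X₂) = ρ(X₁)ρ(X₂), or (b) there exist Z₁, Z₄ ∈ A* and Z₂, Z₃ ∈ A⁺ with X₁ = Z₁Z₂, X₂ = Z₃Z₄ and Z₂Z₃ = W₀, such that ρ(X₁X₂) = ρ(Z₁)sρ(Z₄). -/
/-- A rewriting system: every rule has nonempty left- and right-hand sides. -/
def IsRWS {α : Type*} (R : Set (List α × List α)) : Prop :=
  ∀ r ∈ R, r.1 ≠ [] ∧ r.2 ≠ []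

/-- One-step reduction `W₁ →_R W₂`. -/
def Step {α : Type*} (R : Set (List α × List α)) (W₁ W₂ : List α) : Prop :=
  ∃ Z₁ Z₂ X Y, (X, Y) ∈ R ∧ W₁ = Z₁ ++ X ++ Z₂ ∧ W₂ = Z₁ ++ Y ++ Z₂

/-- `→*_R`: the reflexive-transitive closure of one-step reduction. -/
def Steps {α : Type*} (R : Set (List α × List α)) : List α → List α → Prop :=
  Relation.ReflTransGen (Step R)

/-- Noetherian: no infinite reduction sequence. -/
def Noetherian {α : Type*} (R : Set (List α × List α)) : Prop :=
  ¬ ∃ g : ℕ → List α, ∀ i, Step R (g i) (g (i + 1))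

/-- Confluence. -/
def Confluent {α : Type*} (R : Set (List α × List α)) : Prop :=
  ∀ U V W, Steps R U V → Steps R U W → ∃ X, Steps R V X ∧ Steps R W X

/-- Complete rewriting system: Noetherian and confluent. -/
def CompleteRWS {α : Type*} (R : Set (List α × List α)) : Prop :=
  Noetherian R ∧ Confluent R

/-- `Irr R W`: `W ∈ A⁺` has no factor which is the left-hand side of a rule. -/
def Irr {α : Type*} (R : Set (List α × List α)) (W : List α) : Prop :=
  W ≠ [] ∧ ¬ ∃ Z₁ X Z₂, (∃ Y, (X, Y) ∈ R) ∧ W = Z₁ ++ X ++ Z₂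

/-- `Presents R f`: the map sending a nonempty word `u` over `α` to `f u` exhibits the
semigroup `S` as the semigroup presented by `[α; R]`, i.e. the semigroup `A⁺/↔*_R`:
`f` restricted to nonempty words is a surjective semigroup homomorphism whose kernel
is the congruence `↔*_R` generated by `R` (the value of `f` on the empty word is irrelevant). -/
def Presents {α S : Type*} [Semigroup S] (R : Set (List α × List α)) (f : List α → S) : Prop :=
  (∀ u v : List α, u ≠ [] → v ≠ [] → f (u ++ v) = f u * f v) ∧
  (∀ x : S, ∃ u : List α, u ≠ [] ∧ f u = x) ∧
  (∀ u v : List α, u ≠ [] → v ≠ [] → (f u = f v ↔ Relation.EqvGen (Step R) u v))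

/-- `S` has a finite complete rewriting system. -/
def HasFCRS (S : Type*) [Semigroup S] : Prop :=
  ∃ (α : Type) (R : Set (List α × List α)) (f : List α → S),
    Finite α ∧ R.Finite ∧ IsRWS R ∧ CompleteRWS R ∧ Presents R f

/-! ### The construction of Section 3: adjoining a letter `s` with `φ(s) = W₀`.
The alphabet `B = A ∪ {s}` is modelled as `α ⊕ Unit`, with `Sum.inl a` the letter
`a ∈ A` and `Sum.inr ()` the new letter `s`. -/

/-- The homomorphism `φ : B* → A*` with `φ(a) = a` for `a ∈ A` and `φ(s) = W₀`. -/
def phiS {α : Type*} (W₀ : List α) (l : List (α ⊕ Unit)) : List α :=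
  l.flatMap (Sum.elim (fun a => [a]) (fun _ => W₀))

open scoped Classical in
/-- The function `ρ : A* → B*`: `ρ(ε) = ε`; if `W = X₁W₀` ends with `W₀` then
`ρ(W) = ρ(X₁)s`; otherwise `W = X₂a` with `a ∈ A` and `ρ(W) = ρ(X₂)a`. -/
noncomputable def rhoS {α : Type*} (W₀ : List α) (W : List α) : List (α ⊕ Unit) :=
  if hW : W = [] then []
  else if h : W₀ ≠ [] ∧ W₀ <:+ W then
    rhoS W₀ (W.take (W.length - W₀.length)) ++ [Sum.inr ()]
  else
    rhoS W₀ W.dropLast ++ [Sum.inl (W.getLast hW)]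
termination_by W.length
decreasing_by
  · have h1 : W₀.length ≤ W.length := h.2.length_le
    have h2 : 0 < W₀.length := List.length_pos_iff.mpr h.1
    simp only [List.length_take]
    omega
  · have h3 : 0 < W.length := List.length_pos_iff.mpr hW
    simp only [List.length_dropLast]
    omega

/-- Rules of the form (C1): `ρ(X) → ρ(Y)` for each rule `X → Y` of `R`. -/
def C1 {α : Type*} (R : Set (List α × List α)) (W₀ : List α) :
    Set (List (α ⊕ Unit) × List (α ⊕ Unit)) :=
  {p | ∃ X Y : List α, (X, Y) ∈ R ∧ p = (rhoS W₀ X, rhoS W₀ Y)}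

/-- The rule (C2): `W₀ → s`. -/
def C2 {α : Type*} (W₀ : List α) : Set (List (α ⊕ Unit) × List (α ⊕ Unit)) :=
  {p | p = (W₀.map Sum.inl, [Sum.inr ()])}

/-- Rules of the form (C3): for each rule `X₁X₂ → Y₁` of `R` with `W₀ = Z₁X₁`
(`X₁, Y₁ ∈ A⁺`, `X₂, Z₁ ∈ A*`), the rule `ρ(Z₁X₁X₂) → ρ(Y₁')` where
`Z₁X₁X₂ →*_R Y₁' ∈ Irr(R)`. -/
def C3 {α : Type*} (R : Set (List α × List α)) (W₀ : List α) :
    Set (List (α ⊕ Unit) × List (α ⊕ Unit)) :=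
  {p | ∃ X₁ X₂ Y₁ Z₁ Y₁' : List α, X₁ ≠ [] ∧ Y₁ ≠ [] ∧ (X₁ ++ X₂, Y₁) ∈ R ∧
    W₀ = Z₁ ++ X₁ ∧ Steps R (Z₁ ++ X₁ ++ X₂) Y₁' ∧ Irr R Y₁' ∧
    p = (rhoS W₀ (Z₁ ++ X₁ ++ X₂), rhoS W₀ Y₁')}

/-- Rules of the form (C4): for each rule `X₂X₁ → Y₁` of `R` with `W₀ = X₁Z₁`
(`X₁, Y₁ ∈ A⁺`, `X₂, Z₁ ∈ A*`), the rule `ρ(X₂X₁Z₁) → ρ(Y₁')` where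
`X₂X₁Z₁ →*_R Y₁' ∈ Irr(R)`. -/
def C4 {α : Type*} (R : Set (List α × List α)) (W₀ : List α) :
    Set (List (α ⊕ Unit) × List (α ⊕ Unit)) :=
  {p | ∃ X₁ X₂ Y₁ Z₁ Y₁' : List α, X₁ ≠ [] ∧ Y₁ ≠ [] ∧ (X₂ ++ X₁, Y₁) ∈ R ∧
    W₀ = X₁ ++ Z₁ ∧ Steps R (X₂ ++ X₁ ++ Z₁) Y₁' ∧ Irr R Y₁' ∧
    p = (rhoS W₀ (X₂ ++ X₁ ++ Z₁), rhoS W₀ Y₁')}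

/-- Rules of the form (C5): for each rule `X₂X₃X₄ → Y₁` of `R` with `W₀ = X₄X₅ = X₁X₂`
(`X₂, X₄, Y₁ ∈ A⁺`, `X₁, X₃, X₅ ∈ A*`), the rule `ρ(X₁X₂X₃X₄X₅) → ρ(Y₁')` where
`X₁X₂X₃X₄X₅ →*_R Y₁' ∈ Irr(R)`. -/
def C5 {α : Type*} (R : Set (List α × List α)) (W₀ : List α) :
    Set (List (α ⊕ Unit) × List (α ⊕ Unit)) :=
  {p | ∃ X₁ X₂ X₃ X₄ X₅ Y₁ Y₁' : List α, X₂ ≠ [] ∧ X₄ ≠ [] ∧ Y₁ ≠ [] ∧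
    (X₂ ++ X₃ ++ X₄, Y₁) ∈ R ∧ W₀ = X₄ ++ X₅ ∧ W₀ = X₁ ++ X₂ ∧
    Steps R (X₁ ++ X₂ ++ X₃ ++ X₄ ++ X₅) Y₁' ∧ Irr R Y₁' ∧
    p = (rhoS W₀ (X₁ ++ X₂ ++ X₃ ++ X₄ ++ X₅), rhoS W₀ Y₁')}

/-- Rules of the form (C6): `sX₃ → X₁s` whenever `W₀ = X₁X₂ = X₂X₃` with
`X₁, X₂, X₃ ∈ A⁺`. -/
def C6 {α : Type*} (W₀ : List α) : Set (List (α ⊕ Unit) × List (α ⊕ Unit)) :=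
  {p | ∃ X₁ X₂ X₃ : List α, X₁ ≠ [] ∧ X₂ ≠ [] ∧ X₃ ≠ [] ∧
    W₀ = X₁ ++ X₂ ∧ W₀ = X₂ ++ X₃ ∧
    p = (Sum.inr () :: X₃.map Sum.inl, X₁.map Sum.inl ++ [Sum.inr ()])}

/-- The rewriting system `R_S` over `B = A ∪ {s}`. -/
def RS {α : Type*} (R : Set (List α × List α)) (W₀ : List α) :
    Set (List (α ⊕ Unit) × List (α ⊕ Unit)) :=
  C1 R W₀ ∪ C2 W₀ ∪ C3 R W₀ ∪ C4 R W₀ ∪ C5 R W₀ ∪ C6 W₀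

/-!
Induct on `X₂` from the right, following the recursion defining `ρ`. Peeling a trailing `W₀` or a
trailing letter off `X₂` acts on `ρ(X₁X₂)` exactly as on `ρ(X₂)`, as long as no occurrence of `W₀`
ending at the end of the word straddles the boundary between `X₁` and `X₂`; once one does, the
recursion for `ρ(X₁X₂)` emits an `s` for it and continues inside `X₁`.
-/

theorem List.exists_eq_append_of_suffix_append_of_not_suffix {α : Type*} {l l₁ l₂ : List α}
    (h : l <:+ l₁ ++ l₂) (h' : ¬ l <:+ l₂) : ∃ t u, u ≠ [] ∧ l₁ = t ++ u ∧ u ++ l₂ = l := by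
  obtain ⟨t, ht⟩ := h
  rcases List.append_eq_append_iff.mp ht with ⟨u, rfl, rfl⟩ | ⟨v, -, rfl⟩
  · refine ⟨t, u, ?_, rfl, rfl⟩
    rintro rfl
    exact h' (List.suffix_refl _)
  · exact absurd (List.suffix_append v l) h'

section Rho

variable {α : Type*} {W₀ : List α}

theorem rhoS_nil (W₀ : List α) : rhoS W₀ [] = [] := by
  rw [rhoS, dif_pos rfl]

theorem rhoS_append_self (hW₀ : W₀ ≠ []) (U : List α) :
    rhoS W₀ (U ++ W₀) = rhoS W₀ U ++ [Sum.inr ()] := by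
  rw [rhoS, dif_neg (by simp [hW₀]), dif_pos ⟨hW₀, List.suffix_append U W₀⟩]
  simp

theorem rhoS_append_singleton {U : List α} {a : α} (h : ¬ W₀ <:+ U ++ [a]) :
    rhoS W₀ (U ++ [a]) = rhoS W₀ U ++ [Sum.inl a] := by
  rw [rhoS, dif_neg (by simp), dif_neg (fun h' => h h'.2)]
  simp

def RhoAppendSplit (W₀ X₁ X₂ : List α) : Prop :=
  rhoS W₀ (X₁ ++ X₂) = rhoS W₀ X₁ ++ rhoS W₀ X₂ ∨
  ∃ Z₁ Z₂ Z₃ Z₄ : List α, Z₂ ≠ [] ∧ Z₃ ≠ [] ∧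
    X₁ = Z₁ ++ Z₂ ∧ X₂ = Z₃ ++ Z₄ ∧ Z₂ ++ Z₃ = W₀ ∧
    rhoS W₀ (X₁ ++ X₂) = rhoS W₀ Z₁ ++ [Sum.inr ()] ++ rhoS W₀ Z₄

theorem rhoAppendSplit_nil_right (X₁ : List α) : RhoAppendSplit W₀ X₁ [] :=
  Or.inl (by simp [rhoS_nil])

theorem RhoAppendSplit.append {X₁ X₂ V : List α} {c : List (α ⊕ Unit)}
    (h : RhoAppendSplit W₀ X₁ X₂)
    (hV : ∀ U, U <:+ X₁ ++ X₂ → rhoS W₀ (U ++ V) = rhoS W₀ U ++ c) :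
    RhoAppendSplit W₀ X₁ (X₂ ++ V) := by
  rw [RhoAppendSplit, ← List.append_assoc, hV _ (List.suffix_refl _)]
  rcases h with h | ⟨Z₁, Z₂, Z₃, Z₄, hZ₂, hZ₃, rfl, rfl, hW, hρ⟩
  · left
    rw [h, hV X₂ (List.suffix_append _ _), List.append_assoc]
  · right
    refine ⟨Z₁, Z₂, Z₃, Z₄ ++ V, hZ₂, hZ₃, rfl, by simp, hW, ?_⟩
    rw [hρ, hV Z₄ ⟨Z₁ ++ Z₂ ++ Z₃, by simp⟩, List.append_assoc]

theorem rhoAppendSplit_of_straddle {X₁ X₂ : List α} (hW₀ : W₀ ≠ []) (hX₂ : X₂ ≠ [])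
    (h : W₀ <:+ X₁ ++ X₂) (h' : ¬ W₀ <:+ X₂) : RhoAppendSplit W₀ X₁ X₂ := by
  obtain ⟨Z₁, Z₂, hZ₂, rfl, hW⟩ := List.exists_eq_append_of_suffix_append_of_not_suffix h h'
  refine Or.inr ⟨Z₁, Z₂, X₂, [], hZ₂, hX₂, rfl, by simp, hW, ?_⟩
  rw [List.append_assoc, hW, rhoS_append_self hW₀, rhoS_nil, List.append_nil]

theorem rhoAppendSplit (hW₀ : W₀ ≠ []) (X₁ X₂ : List α) : RhoAppendSplit W₀ X₁ X₂ := by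
  rcases eq_or_ne X₂ [] with rfl | hX₂
  · exact rhoAppendSplit_nil_right X₁
  by_cases hsuf : W₀ <:+ X₂
  · obtain ⟨X₂', rfl⟩ := hsuf
    have : X₂'.length < (X₂' ++ W₀).length := by simp [List.length_pos_iff.mpr hW₀]
    exact (rhoAppendSplit hW₀ X₁ X₂').append fun U _ => rhoS_append_self hW₀ U
  by_cases hstr : W₀ <:+ X₁ ++ X₂
  · exact rhoAppendSplit_of_straddle hW₀ hX₂ hstr hsuf
  obtain ⟨X₂', a, rfl⟩ := X₂.eq_nil_or_concat'.resolve_left hX₂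
  have : X₂'.length < (X₂' ++ [a]).length := by simp
  refine (rhoAppendSplit hW₀ X₁ X₂').append fun U hU => rhoS_append_singleton fun hW => ?_
  exact hstr (hW.trans (by simpa using List.suffix_append_self_iff.mpr hU))
termination_by X₂.length

end Rho

theorem lemma_3_2_general {α : Type*}
    (W₀ : List α) (hW₀len : 1 < W₀.length)
    (X₁ X₂ : List α) :
    rhoS W₀ (X₁ ++ X₂) = rhoS W₀ X₁ ++ rhoS W₀ X₂ ∨
    ∃ Z₁ Z₂ Z₃ Z₄ : List α, Z₂ ≠ [] ∧ Z₃ ≠ [] ∧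
      X₁ = Z₁ ++ Z₂ ∧ X₂ = Z₃ ++ Z₄ ∧ Z₂ ++ Z₃ = W₀ ∧
      rhoS W₀ (X₁ ++ X₂) = rhoS W₀ Z₁ ++ [Sum.inr ()] ++ rhoS W₀ Z₄ :=
  rhoAppendSplit (List.ne_nil_of_length_pos (by omega)) X₁ X₂

/-- **Lemma 3.2.** For `X₁, X₂ ∈ A⁺`, either `ρ(X₁X₂) = ρ(X₁)ρ(X₂)`, or
`ρ(X₁X₂) = ρ(Z₁)sρ(Z₄)` where `X₁ = Z₁Z₂`, `X₂ = Z₃Z₄` and `Z₂Z₃ = W₀`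
(`Z₁, Z₄ ∈ A*`, `Z₂, Z₃ ∈ A⁺`). -/
theorem lemma_3_2 {α : Type*} (R : Set (List α × List α))
    (hαfin : Finite α) (hRfin : R.Finite) (hRWS : IsRWS R) (hcomp : CompleteRWS R)
    (W₀ : List α) (hW₀len : 1 < W₀.length) (hW₀irr : Irr R W₀)
    (X₁ X₂ : List α) (h₁ : X₁ ≠ []) (h₂ : X₂ ≠ []) :
    rhoS W₀ (X₁ ++ X₂) = rhoS W₀ X₁ ++ rhoS W₀ X₂ ∨
    ∃ Z₁ Z₂ Z₃ Z₄ : List α, Z₂ ≠ [] ∧ Z₃ ≠ [] ∧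
      X₁ = Z₁ ++ Z₂ ∧ X₂ = Z₃ ++ Z₄ ∧ Z₂ ++ Z₃ = W₀ ∧
      rhoS W₀ (X₁ ++ X₂) = rhoS W₀ Z₁ ++ [Sum.inr ()] ++ rhoS W₀ Z₄ :=
  lemma_3_2_general W₀ hW₀len X₁ X₂
end

section
/- There does not exist an infinite reduction sequence U'₁ →_{R_S} U'₂ →_{R_S} U'₃ →_{R_S} ⋯ of words from B⁺ such that φ(U'₁) = φ(U'₂) = φ(U'₃) = ⋯. -/
/-!
A `φ`-preserving `R_S`-step never uses a rule of type (C1), (C3), (C4) or (C5): since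
`φ ∘ ρ = id`, such a rule would have to be of the form `ρ(X) → ρ(X)`, which is impossible for
(C1) because `R` is Noetherian and for (C3)–(C5) because the right-hand side is `R`-irreducible
while the left-hand side contains the left-hand side of a rule of `R`. A (C2)-step shortens the
word (as `‖W₀‖ > 1`), and a (C6)-step `sX₃ → X₁s` keeps the length and moves a letter of `A` in
front of `s`. So every such step decreases the word in the shortlex order in which letters of `A`
precede `s`, which is well founded.
-/

namespace List

theorem Lex.append_right_of_length_eq {α : Type*} {r : α → α → Prop} {s₁ s₂ : List α}
    (h : Lex r s₁ s₂) (hlen : s₁.length = s₂.length) (t : List α) :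
    Lex r (s₁ ++ t) (s₂ ++ t) := by
  induction h with
  | nil => simp at hlen
  | cons _ ih => exact .cons (ih (by simpa using hlen))
  | rel h => exact .rel h

theorem Shortlex.append_right_of_shortlex {α : Type*} {r : α → α → Prop} {s₁ s₂ : List α}
    (h : Shortlex r s₁ s₂) (t : List α) : Shortlex r (s₁ ++ t) (s₂ ++ t) := by
  rcases shortlex_def.mp h with hlt | ⟨hlen, hlex⟩
  · exact .of_length_lt (by simpa using hlt)
  · exact .of_lex (by simpa using hlen) (hlex.append_right_of_length_eq hlen t)

end List

section

variable {α : Type*}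

theorem phiS_append (W₀ : List α) (u v : List (α ⊕ Unit)) :
    phiS W₀ (u ++ v) = phiS W₀ u ++ phiS W₀ v :=
  List.flatMap_append

theorem phiS_rhoS (W₀ W : List α) : phiS W₀ (rhoS W₀ W) = W := by
  induction hn : W.length using Nat.strong_induction_on generalizing W with
  | _ n ih =>
    rw [rhoS]
    split_ifs with hW h
    · simp [hW, phiS]
    · obtain ⟨t, rfl⟩ := h.2
      have hW₀ := List.length_pos_iff.mpr h.1
      have ht : (t ++ W₀).take ((t ++ W₀).length - W₀.length) = t := by simp
      rw [phiS_append, ht, ih t.length (by rw [← hn, List.length_append]; omega) t rfl]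
      simp [phiS]
    · have hlen := List.length_pos_iff.mpr hW
      rw [phiS_append, ih _ (by rw [List.length_dropLast]; omega) _ rfl]
      simpa [phiS] using List.dropLast_append_getLast hW

/-- The letters of `A` precede the new letter `s`. -/
def LetterLT (x y : α ⊕ Unit) : Prop := x.isRight < y.isRight

theorem wellFounded_letterLT : WellFounded (@LetterLT α) :=
  InvImage.wf Sum.isRight wellFounded_lt

section Rules

variable {R : Set (List α × List α)} {W₀ : List α} {X Y : List (α ⊕ Unit)}

theorem phiS_ne_of_mem_C1 (hR : Noetherian R) (h : (X, Y) ∈ C1 R W₀) :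
    phiS W₀ Y ≠ phiS W₀ X := by
  obtain ⟨X, Y, hXY, heq⟩ := h
  simp only [Prod.mk.injEq] at heq
  rw [heq.1, heq.2, phiS_rhoS, phiS_rhoS]
  rintro rfl
  exact hR ⟨fun _ => Y, fun _ => ⟨[], [], Y, Y, hXY, by simp, by simp⟩⟩

theorem phiS_ne_of_mem_C3 (h : (X, Y) ∈ C3 R W₀) : phiS W₀ Y ≠ phiS W₀ X := by
  obtain ⟨X₁, X₂, Y₁, Z₁, Y₁', -, -, hR, -, -, hirr, heq⟩ := h
  simp only [Prod.mk.injEq] at heq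
  rw [heq.1, heq.2, phiS_rhoS, phiS_rhoS]
  rintro rfl
  exact hirr.2 ⟨Z₁, X₁ ++ X₂, [], ⟨Y₁, hR⟩, by simp⟩

theorem phiS_ne_of_mem_C4 (h : (X, Y) ∈ C4 R W₀) : phiS W₀ Y ≠ phiS W₀ X := by
  obtain ⟨X₁, X₂, Y₁, Z₁, Y₁', -, -, hR, -, -, hirr, heq⟩ := h
  simp only [Prod.mk.injEq] at heq
  rw [heq.1, heq.2, phiS_rhoS, phiS_rhoS]
  rintro rfl
  exact hirr.2 ⟨[], X₂ ++ X₁, Z₁, ⟨Y₁, hR⟩, by simp⟩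

theorem phiS_ne_of_mem_C5 (h : (X, Y) ∈ C5 R W₀) : phiS W₀ Y ≠ phiS W₀ X := by
  obtain ⟨X₁, X₂, X₃, X₄, X₅, Y₁, Y₁', -, -, -, hR, -, -, -, hirr, heq⟩ := h
  simp only [Prod.mk.injEq] at heq
  rw [heq.1, heq.2, phiS_rhoS, phiS_rhoS]
  rintro rfl
  exact hirr.2 ⟨X₁, X₂ ++ X₃ ++ X₄, X₅, ⟨Y₁, hR⟩, by simp⟩

theorem shortlex_of_mem_C2 (hW₀ : 1 < W₀.length) (h : (X, Y) ∈ C2 W₀) :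
    List.Shortlex LetterLT Y X := by
  simp only [C2, Set.mem_ofPred_eq, Prod.mk.injEq] at h
  rw [h.1, h.2]
  exact .of_length_lt (by simpa using hW₀)

theorem shortlex_of_mem_C6 (h : (X, Y) ∈ C6 W₀) : List.Shortlex LetterLT Y X := by
  obtain ⟨X₁, X₂, X₃, hX₁, -, -, h₁₂, h₂₃, heq⟩ := h
  simp only [Prod.mk.injEq] at heq
  obtain ⟨a, X₁, rfl⟩ := List.exists_cons_of_ne_nil hX₁
  have hlen : X₁.length + 1 = X₃.length := by
    have := congrArg List.length h₂₃
    simp only [h₁₂, List.length_append, List.length_cons] at this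
    omega
  rw [heq.1, heq.2]
  exact .of_lex (by simp [hlen]) (.rel (by simp [LetterLT]))

theorem shortlex_of_mem_RS (hR : Noetherian R) (hW₀ : 1 < W₀.length) (h : (X, Y) ∈ RS R W₀)
    (hφ : phiS W₀ Y = phiS W₀ X) : List.Shortlex LetterLT Y X := by
  rcases h with ((((h | h) | h) | h) | h) | h
  · exact absurd hφ (phiS_ne_of_mem_C1 hR h)
  · exact shortlex_of_mem_C2 hW₀ h
  · exact absurd hφ (phiS_ne_of_mem_C3 h)
  · exact absurd hφ (phiS_ne_of_mem_C4 h)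
  · exact absurd hφ (phiS_ne_of_mem_C5 h)
  · exact shortlex_of_mem_C6 h

theorem shortlex_of_step_RS (hR : Noetherian R) (hW₀ : 1 < W₀.length) {U V : List (α ⊕ Unit)}
    (h : Step (RS R W₀) U V) (hφ : phiS W₀ V = phiS W₀ U) : List.Shortlex LetterLT V U := by
  obtain ⟨Z₁, Z₂, X, Y, hXY, rfl, rfl⟩ := h
  simp only [phiS_append, List.append_cancel_left_eq, List.append_cancel_right_eq] at hφ
  simpa only [List.append_assoc] using
    ((shortlex_of_mem_RS hR hW₀ hXY hφ).append_right_of_shortlex Z₂).append_left Z₁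

end Rules

end

theorem lemma_3_7_general {α : Type*} (R : Set (List α × List α))
    (hcomp : CompleteRWS R)
    (W₀ : List α) (hW₀len : 1 < W₀.length) :
    ¬ ∃ g : ℕ → List (α ⊕ Unit), (∀ i, g i ≠ []) ∧
      (∀ i, Step (RS R W₀) (g i) (g (i + 1))) ∧
      (∀ i, phiS W₀ (g (i + 1)) = phiS W₀ (g i)) := by
  rintro ⟨g, -, hstep, hφ⟩
  exact (wellFounded_iff_isEmpty_descending_chain.mp (List.Shortlex.wf wellFounded_letterLT)).false
    ⟨g, fun i => shortlex_of_step_RS hcomp.1 hW₀len (hstep i) (hφ i)⟩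

/-- **Lemma 3.7** (Property (P3)). There is no infinite reduction sequence
`U'₁ →_{R_S} U'₂ →_{R_S} ⋯` of words from `B⁺` with `φ(U'₁) = φ(U'₂) = ⋯`. -/
theorem lemma_3_7 {α : Type*} (R : Set (List α × List α))
    (hαfin : Finite α) (hRfin : R.Finite) (hRWS : IsRWS R) (hcomp : CompleteRWS R)
    (W₀ : List α) (hW₀len : 1 < W₀.length) (hW₀irr : Irr R W₀) :
    ¬ ∃ g : ℕ → List (α ⊕ Unit), (∀ i, g i ≠ []) ∧
      (∀ i, Step (RS R W₀) (g i) (g (i + 1))) ∧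
      (∀ i, phiS W₀ (g (i + 1)) = phiS W₀ (g i)) :=
  lemma_3_7_general R hcomp W₀ hW₀len
end
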